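/- arXiv:1006.3034 — 10 statements merged into one kernel-verified Lean document; each statement's English description precedes it below -/
import Mathlib

section
/- A set X with a multivalued binary operation (a,b) ↦ a·b (taking values in nonempty subsets of X) is a multigroup if and only if there exist a map X → X, a ↦ a⁻¹, and an element 1 ∈ X such that: (1') (a·b)·c ⊆ a·(b·c) for all a,b,c; (2') a·1 = {a} for all a; (3') c ∈ a·b implies a ∈ c·b⁻¹ and b ∈ a⁻¹·c. -/
/-- Elementwise extension of a multivalued binary operation to subsets. -/
def setOp {X : Type*} (m : X → X → Set X) (A B : Set X) : Set X :=
  ⋃ a ∈ A, ⋃ b ∈ B, m a b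

/-- A multigroup: a multivalued binary operation with nonempty values,
associative (when extended to subsets), with a neutral element `one`,
with unique two-sided inverses given by `inv`, and satisfying the
reversibility axiom `c ∈ a·b ↔ c⁻¹ ∈ b⁻¹·a⁻¹`. -/
structure IsMultigroup {X : Type*} (m : X → X → Set X) (one : X) (inv : X → X) : Prop where
  nonempty : ∀ a b, (m a b).Nonempty
  assoc : ∀ a b c, setOp m (m a b) {c} = setOp m {a} (m b c)
  one_mul : ∀ a, m one a = {a}
  mul_one : ∀ a, m a one = {a}
  inv_right : ∀ a b, one ∈ m a b ↔ b = inv a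
  inv_left : ∀ a c, one ∈ m c a ↔ c = inv a
  rev : ∀ a b c, c ∈ m a b ↔ inv c ∈ m (inv b) (inv a)

lemma mem_setOp {X : Type*} (m : X → X → Set X) (A B : Set X) (x : X) :
    x ∈ setOp m A B ↔ ∃ a ∈ A, ∃ b ∈ B, x ∈ m a b := by
  simp [setOp]

/-- a multivalued operation with nonempty values is a multigroup
iff there exist `one` and `inv` satisfying (1'), (2'), (3'). -/
theorem multigroup_iff {X : Type*} (m : X → X → Set X)
    (hne : ∀ a b, (m a b).Nonempty) :
    (∃ (one : X) (inv : X → X), IsMultigroup m one inv) ↔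
    (∃ (one : X) (inv : X → X),
      (∀ a b c, setOp m (m a b) {c} ⊆ setOp m {a} (m b c)) ∧
      (∀ a, m a one = {a}) ∧
      (∀ a b c, c ∈ m a b → a ∈ m c (inv b) ∧ b ∈ m (inv a) c)) := by
  constructor
  · rintro ⟨one, inv, hg⟩
    refine ⟨one, inv, fun a b c => (hg.assoc a b c).le, hg.mul_one, ?_⟩
    -- involutivity of inv
    have hinvinv : ∀ a, inv (inv a) = a := by
      intro a
      have h1 : one ∈ m (inv a) a := (hg.inv_left a (inv a)).2 rfl
      exact ((hg.inv_right (inv a) a).1 h1).symm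
    intro a b c hc
    constructor
    · -- a ∈ m c (inv b)
      have h1 : one ∈ setOp m (m a b) {inv c} := by
        rw [mem_setOp]
        exact ⟨c, hc, inv c, rfl, (hg.inv_right c (inv c)).2 rfl⟩
      rw [hg.assoc] at h1
      rw [mem_setOp] at h1
      obtain ⟨a', ha', e, he, h1⟩ := h1
      rw [Set.mem_singleton_iff] at ha'; subst a'
      have : e = inv a := (hg.inv_right a e).1 h1
      subst this
      -- inv a ∈ m b (inv c), so a ∈ m c (inv b) by rev
      have := (hg.rev b (inv c) (inv a)).1 he
      rwa [hinvinv, hinvinv] at this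
    · -- b ∈ m (inv a) c
      have h1 : one ∈ setOp m (m (inv c) a) {b} := by
        rw [mem_setOp]
        have : one ∈ setOp m {inv c} (m a b) := by
          rw [mem_setOp]
          exact ⟨inv c, rfl, c, hc, (hg.inv_left c (inv c)).2 rfl⟩
        rw [← hg.assoc] at this
        rwa [mem_setOp] at this
      obtain ⟨d, hd, b', hb', h1⟩ := (mem_setOp m _ _ one).1 h1
      rw [Set.mem_singleton_iff] at hb'; subst b'
      have : d = inv b := (hg.inv_left b d).1 h1
      subst this
      -- inv b ∈ m (inv c) a, so b ∈ m (inv a) c by rev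
      have := (hg.rev (inv c) a (inv b)).1 hd
      rwa [hinvinv, hinvinv] at this
  · rintro ⟨one, inv, h1, h2, h3⟩
    refine ⟨one, inv, ?_⟩
    -- basic facts
    have hmemone : ∀ a : X, a ∈ m a one := fun a => by rw [h2]; rfl
    have hil : ∀ a : X, one ∈ m (inv a) a := fun a => (h3 a one a (hmemone a)).2
    have hinvinv : ∀ a : X, inv (inv a) = a := by
      intro a
      have := (h3 (inv a) a one (hil a)).2
      rw [h2] at this
      exact this.symm
    have hir : ∀ a : X, one ∈ m a (inv a) := by
      intro a
      have := hil (inv a)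
      rwa [hinvinv] at this
    have hrev : ∀ a b c : X, c ∈ m a b → inv c ∈ m (inv b) (inv a) := by
      intro a b c hc
      have h4 : a ∈ m c (inv b) := (h3 a b c hc).1
      have h5 : inv b ∈ m (inv c) a := (h3 c (inv b) a h4).2
      exact (h3 (inv c) a (inv b) h5).1
    have honemul : ∀ a, m one a = {a} := by
      intro a
      apply Set.Subset.antisymm
      · intro x hx
        have h4 : one ∈ m x (inv a) := (h3 one a x hx).1
        have h5 : inv a ∈ m (inv x) one := (h3 x (inv a) one h4).2
        rw [h2] at h5
        rw [Set.mem_singleton_iff] at h5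
        have : inv (inv a) = inv (inv x) := by rw [h5]
        rw [hinvinv, hinvinv] at this
        rw [Set.mem_singleton_iff, this]
      · intro x hx
        rw [Set.mem_singleton_iff] at hx; subst x
        have := (h3 (inv (inv a)) (inv a) one (hil (inv a))).1
        rw [hinvinv] at this
        exact this
    refine ⟨hne, ?_, honemul, h2, ?_, ?_, ?_⟩
    · -- full associativity
      intro a b c
      apply Set.Subset.antisymm (h1 a b c)
      intro x hx
      rw [mem_setOp] at hx
      obtain ⟨a', ha', y, hy, hx⟩ := hx
      rw [Set.mem_singleton_iff] at ha'; subst a'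
      have hx' : inv x ∈ m (inv y) (inv a) := hrev a y x hx
      have hy' : inv y ∈ m (inv c) (inv b) := hrev b c y hy
      have : inv x ∈ setOp m (m (inv c) (inv b)) {inv a} := by
        rw [mem_setOp]; exact ⟨inv y, hy', inv a, rfl, hx'⟩
      have := h1 _ _ _ this
      rw [mem_setOp] at this
      obtain ⟨c', hc', w, hw, hxw⟩ := this
      rw [Set.mem_singleton_iff] at hc'; subst c'
      have hxw' : x ∈ m (inv w) c := by
        have := hrev (inv c) w (inv x) hxw
        rwa [hinvinv, hinvinv] at this
      have hw' : inv w ∈ m a b := by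
        have := hrev (inv b) (inv a) w hw
        rwa [hinvinv, hinvinv] at this
      rw [mem_setOp]
      exact ⟨inv w, hw', c, rfl, hxw'⟩
    · -- inv_right
      intro a b
      constructor
      · intro h
        have := (h3 a b one h).2
        rw [h2, Set.mem_singleton_iff] at this
        exact this
      · rintro rfl; exact hir a
    · -- inv_left
      intro a c
      constructor
      · intro h
        have := (h3 c a one h).1
        rw [honemul, Set.mem_singleton_iff] at this
        exact this
      · rintro rfl; exact hil a
    · -- rev
      intro a b c
      constructor
      · exact hrev a b c
      · intro h
        have := hrev (inv b) (inv a) (inv c) h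
        rwa [hinvinv, hinvinv, hinvinv] at this
end

section
/- Let X be a linearly ordered set with a least element 0. Define a⊞b = {max(a,b)} if a ≠ b, and a⊞a = {x ∈ X : x ≤ a}. Then (X, ⊞) is a commutative multigroup with neutral element 0 in which every element is its own inverse. -/
/-- A commutative multigroup with neutral element `zero` and inverse map `neg`. -/
structure IsCommMultigroup {X : Type*} (m : X → X → Set X) (zero : X) (neg : X → X) : Prop where
  nonempty : ∀ a b, (m a b).Nonempty
  comm : ∀ a b, m a b = m b a
  assoc : ∀ a b c, setOp m (m a b) {c} = setOp m {a} (m b c)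
  zero_add : ∀ a, m zero a = {a}
  neg_mem : ∀ a, zero ∈ m a (neg a)
  neg_unique : ∀ a b, zero ∈ m a b → b = neg a

theorem mem_setOp_singleton_right {X : Type*} {m : X → X → Set X} {A : Set X} {c x : X} :
    x ∈ setOp m A {c} ↔ ∃ y ∈ A, x ∈ m y c := by
  simp [setOp]

theorem mem_setOp_singleton_left {X : Type*} {m : X → X → Set X} {A : Set X} {a x : X} :
    x ∈ setOp m {a} A ↔ ∃ y ∈ A, x ∈ m a y := by
  simp [setOp]

section MaxOp

variable {X : Type*} [LinearOrder X]

def maxOp (a b : X) : Set X := if a ≠ b then {max a b} else {x | x ≤ a}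

theorem mem_maxOp {a b x : X} :
    x ∈ maxOp a b ↔ a ≤ max b x ∧ b ≤ max a x ∧ x ≤ max a b := by
  unfold maxOp
  split_ifs with hab
  · rw [Set.mem_singleton_iff]
    grind
  · obtain rfl : a = b := not_not.mp hab
    simp

theorem maxOp_comm (a b : X) : maxOp a b = maxOp b a := by
  ext x
  simp only [mem_maxOp]
  grind

theorem mem_setOp_maxOp {a b c x : X} :
    x ∈ setOp maxOp (maxOp a b) {c} ↔
      a ≤ max b (max c x) ∧ b ≤ max a (max c x) ∧ c ≤ max a (max b x) ∧
        x ≤ max a (max b c) := by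
  simp only [mem_setOp_singleton_right, mem_maxOp]
  constructor
  · rintro ⟨y, hy, hyc⟩
    grind
  · rintro ⟨ha, hb, hc, hx⟩
    -- `y` must lie in both `a ⊞ b ⊆ Iic (max a b)` and `x ⊞ c ⊆ Iic (max c x)`.
    refine ⟨min (max a b) (max c x), ?_⟩
    rcases min_choice (max a b) (max c x) with h | h <;> rw [h] <;> grind

theorem maxOp_assoc (a b c : X) :
    setOp maxOp (maxOp a b) {c} = setOp maxOp {a} (maxOp b c) := by
  ext x
  have hswap : x ∈ setOp maxOp {a} (maxOp b c) ↔ x ∈ setOp maxOp (maxOp b c) {a} := by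
    simp only [mem_setOp_singleton_left, mem_setOp_singleton_right, maxOp_comm a]
  rw [hswap, mem_setOp_maxOp, mem_setOp_maxOp]
  grind

end MaxOp

/-- on a linearly ordered set with least element `zero`,
the operation `a⊞b = {max a b}` for `a ≠ b`, `a⊞a = {x : x ≤ a}` is a
commutative multigroup with neutral element `zero` in which every element
is its own inverse. -/
theorem linearOrder_multigroup {X : Type*} [LinearOrder X] (zero : X)
    (h0 : ∀ x, zero ≤ x) :
    IsCommMultigroup
      (fun a b => if a ≠ b then {max a b} else {x : X | x ≤ a}) zero id := by
  have max_zero_left (x : X) : max zero x = x := max_eq_right (h0 x)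
  have max_zero_right (x : X) : max x zero = x := max_eq_left (h0 x)
  refine (show IsCommMultigroup maxOp zero id from ⟨?_, maxOp_comm, maxOp_assoc, ?_, ?_, ?_⟩)
  · exact fun a b => ⟨max a b, mem_maxOp.mpr ⟨by simp, by simp, le_rfl⟩⟩
  · intro a
    ext x
    simp only [mem_maxOp, max_zero_left, h0, true_and, Set.mem_singleton_iff]
    exact ⟨fun h => le_antisymm h.2 h.1, fun h => ⟨h.ge, h.le⟩⟩
  · intro a
    simp [mem_maxOp, h0]
  · intro a b h
    simp only [mem_maxOp, max_zero_right] at h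
    exact le_antisymm h.2.1 h.1
end

section
/- If f : X → Y is a surjective strong homomorphism of multigroups, then the induced multigroup homomorphism from the quotient X/Ker f to Y is an isomorphism. In particular, if x,y ∈ X satisfy f(x) = f(y), then x ∈ y·c for some c ∈ Ker f. -/
theorem multigroup_inv_inv {X : Type*} {m : X → X → Set X} {one : X} {inv : X → X}
    (h : IsMultigroup m one inv) (a : X) : inv (inv a) = a := by
  have h1 : one ∈ m (inv a) a := (h.inv_left a (inv a)).mpr rfl
  exact ((h.inv_right (inv a) a).mp h1).symm

/-- Reversibility: `c ∈ a·b → b ∈ a⁻¹·c`. -/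
theorem multigroup_reverse {X : Type*} {m : X → X → Set X} {one : X} {inv : X → X}
    (h : IsMultigroup m one inv) {a b c : X} (hc : c ∈ m a b) : b ∈ m (inv a) c := by
  have h1 : one ∈ setOp m {inv c} (m a b) := by
    simp only [setOp, Set.mem_iUnion, Set.mem_singleton_iff]
    exact ⟨inv c, rfl, c, hc, (h.inv_left c (inv c)).mpr rfl⟩
  rw [← h.assoc] at h1
  simp only [setOp, Set.mem_iUnion, Set.mem_singleton_iff] at h1
  obtain ⟨u, hu, v, hv, h2⟩ := h1
  rw [hv] at h2
  have hub : u = inv b := (h.inv_left b u).mp h2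
  subst hub
  have : inv b ∈ m (inv c) (inv (inv a)) := by rw [multigroup_inv_inv h]; exact hu
  exact (h.rev (inv a) c b).mpr this

/-- if `f : X → Y` is a surjective strong multigroup homomorphism,
then the induced map from the quotient of `X` by the kernel of `f` (two
elements being identified iff one lies in the product of the other with a
kernel element) to `Y` is a bijection; in particular `f x = f y` implies
`x ∈ y·c` for some `c` in the kernel of `f`. -/
theorem strong_surjective_hom_quotient_iso {X Y : Type*}
    (mX : X → X → Set X) (eX : X) (invX : X → X)
    (mY : Y → Y → Set Y) (eY : Y) (invY : Y → Y)
    (hX : IsMultigroup mX eX invX) (hY : IsMultigroup mY eY invY)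
    (f : X → Y) (hfe : f eX = eY)
    (hstrong : ∀ a b, f '' (mX a b) = mY (f a) (f b))
    (hsurj : Function.Surjective f) :
    (∀ x y, f x = f y → ∃ c, f c = eY ∧ x ∈ mX y c) ∧
    ∃ g : Quot (fun x y => ∃ c, f c = eY ∧ x ∈ mX y c) → Y,
      (∀ x, g (Quot.mk _ x) = f x) ∧ Function.Bijective g := by
  -- f commutes with inverses
  have finv : ∀ a, f (invX a) = invY (f a) := by
    intro a
    have h1 : eX ∈ mX a (invX a) := (hX.inv_right a (invX a)).mpr rfl
    have h2 : eY ∈ mY (f a) (f (invX a)) := by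
      rw [← hstrong]; exact ⟨eX, h1, hfe⟩
    exact (hY.inv_right (f a) (f (invX a))).mp h2
  have key : ∀ x y, f x = f y → ∃ c, f c = eY ∧ x ∈ mX y c := by
    intro x y hxy
    have h1 : eY ∈ mY (f (invX y)) (f x) := by
      rw [finv, hxy]
      exact (hY.inv_left (f y) (invY (f y))).mpr rfl
    rw [← hstrong] at h1
    obtain ⟨c, hc, hfc⟩ := h1
    refine ⟨c, hfc, ?_⟩
    have := multigroup_reverse hX hc
    rwa [multigroup_inv_inv hX] at this
  refine ⟨key, ?_⟩
  -- the induced map is well-defined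
  have hresp : ∀ x y, (∃ c, f c = eY ∧ x ∈ mX y c) → f x = f y := by
    rintro x y ⟨c, hfc, hx⟩
    have h1 : f x ∈ mY (f y) (f c) := by rw [← hstrong]; exact ⟨x, hx, rfl⟩
    rw [hfc, hY.mul_one] at h1
    exact h1
  refine ⟨Quot.lift f hresp, fun x => rfl, ?_, fun y => ?_⟩
  · intro q1 q2
    induction q1 using Quot.ind with | _ x =>
    induction q2 using Quot.ind with | _ y =>
    intro h
    exact Quot.sound (key x y h)
  · obtain ⟨x, hx⟩ := hsurj y
    exact ⟨Quot.mk _ x, hx⟩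
end

section
/- The set ℝ≥0 of nonnegative real numbers with the multivalued addition a⊞b = {c ∈ ℝ≥0 : |a-b| ≤ c ≤ a+b} (the triangle addition) and the usual multiplication is a hyperfield: the addition is commutative and associative, 0 is neutral, each a is its own additive inverse (the unique x with 0 ∈ a⊞x is a), multiplication distributes over ⊞, and the nonzero elements form a multiplicative group. -/
open scoped NNReal

/-- The triangle addition on nonnegative reals:
`a⊞b = {c : |a-b| ≤ c ≤ a+b}`. -/
def tadd (a b : ℝ≥0) : Set ℝ≥0 :=
  {c | |(a : ℝ) - (b : ℝ)| ≤ (c : ℝ) ∧ (c : ℝ) ≤ (a : ℝ) + (b : ℝ)}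

/-- Elementwise extension of the triangle addition to subsets. -/
def setTadd (A B : Set ℝ≥0) : Set ℝ≥0 :=
  ⋃ a ∈ A, ⋃ b ∈ B, tadd a b

lemma tadd_mem_iff {a b c : ℝ≥0} :
    c ∈ tadd a b ↔ |(a : ℝ) - (b : ℝ)| ≤ (c : ℝ) ∧ (c : ℝ) ≤ (a : ℝ) + (b : ℝ) := Iff.rfl

lemma tadd_assoc_char (u v w x : ℝ≥0) :
    (∃ t, t ∈ tadd u v ∧ x ∈ tadd t w) ↔
      ((u : ℝ) - v - w ≤ (x : ℝ) ∧ (v : ℝ) - u - w ≤ (x : ℝ) ∧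
        (w : ℝ) - u - v ≤ (x : ℝ) ∧ (x : ℝ) ≤ (u : ℝ) + v + w) := by
  constructor
  · rintro ⟨t, ⟨h1, h2⟩, ⟨h3, h4⟩⟩
    rw [abs_le] at h1 h3
    refine ⟨by linarith [h1.1, h3.2], by linarith [h1.2, h3.2], by linarith [h3.1], by linarith⟩
  · rintro ⟨h1, h2, h3, h4⟩
    have hu : (0:ℝ) ≤ u := u.coe_nonneg
    have hv : (0:ℝ) ≤ v := v.coe_nonneg
    have hw : (0:ℝ) ≤ w := w.coe_nonneg
    have hx : (0:ℝ) ≤ x := x.coe_nonneg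
    set T : ℝ := max |(u:ℝ) - v| |(x:ℝ) - w| with hT
    have hT0 : 0 ≤ T := le_trans (abs_nonneg _) (le_max_left _ _)
    refine ⟨⟨T, hT0⟩, ⟨?_, ?_⟩, ?_, ?_⟩
    · exact le_max_left _ _
    · have h5 : |(u:ℝ) - v| ≤ u + v := abs_le.2 ⟨by linarith, by linarith⟩
      have h6 : |(x:ℝ) - w| ≤ u + v := abs_le.2 ⟨by linarith, by linarith⟩
      exact max_le h5 h6
    · have h5a : T - (w:ℝ) ≤ x := by
        rcases max_cases |(u:ℝ) - v| |(x:ℝ) - w| with ⟨he, _⟩ | ⟨he, _⟩ <;> rw [hT, he]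
        · rcases abs_cases ((u:ℝ) - v) with ⟨he2, _⟩ | ⟨he2, _⟩ <;> rw [he2] <;> linarith
        · rcases abs_cases ((x:ℝ) - w) with ⟨he2, _⟩ | ⟨he2, _⟩ <;> rw [he2] <;> linarith
      have h5b : (w:ℝ) - T ≤ x := by
        have h6 : (w:ℝ) - x ≤ |(x:ℝ) - w| := by
          rw [abs_sub_comm]; exact le_abs_self _
        have h7 : |(x:ℝ) - w| ≤ T := le_max_right _ _
        linarith
      show |T - (w:ℝ)| ≤ (x:ℝ)
      exact abs_le.2 ⟨by linarith, by linarith⟩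
    · have : (x:ℝ) - w ≤ T := le_trans (le_abs_self _) (le_max_right _ _)
      show (x:ℝ) ≤ T + w
      linarith

/-- `(ℝ≥0, ⊞, ·)` with the triangle addition is a hyperfield:
the addition has nonempty values, is commutative and associative, `0` is
neutral, each `a` is its own unique additive inverse, multiplication
distributes over `⊞`, and nonzero elements are invertible (the
multiplication of `ℝ≥0` being commutative and associative with unity `1`). -/
theorem triangle_hyperfield :
    (∀ a b, (tadd a b).Nonempty) ∧
    (∀ a b, tadd a b = tadd b a) ∧
    (∀ a b c, setTadd (tadd a b) {c} = setTadd {a} (tadd b c)) ∧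
    (∀ a, tadd 0 a = {a}) ∧
    (∀ a x, 0 ∈ tadd a x ↔ x = a) ∧
    (∀ a b c, (a * ·) '' tadd b c = tadd (a * b) (a * c)) ∧
    (∀ a : ℝ≥0, a ≠ 0 → ∃ b, a * b = 1) := by
  refine ⟨?_, ?_, ?_, ?_, ?_, ?_, ?_⟩
  · intro a b
    exact ⟨a + b, abs_le.2 ⟨by push_cast; linarith [a.coe_nonneg, b.coe_nonneg],
      by push_cast; linarith [a.coe_nonneg, b.coe_nonneg]⟩, by push_cast; linarith⟩
  · intro a b
    ext x
    simp only [tadd, Set.mem_setOf_eq, abs_sub_comm (a:ℝ) (b:ℝ), add_comm (a:ℝ) (b:ℝ)]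
  · intro a b c
    ext x
    have h1 : x ∈ setTadd (tadd a b) {c} ↔ ∃ t, t ∈ tadd a b ∧ x ∈ tadd t c := by
      simp [setTadd]
    have h2 : x ∈ setTadd {a} (tadd b c) ↔ ∃ t, t ∈ tadd b c ∧ x ∈ tadd t a := by
      simp only [setTadd, Set.mem_iUnion, Set.mem_singleton_iff]
      constructor
      · rintro ⟨a', rfl, t, ht, hx⟩
        refine ⟨t, ht, ?_⟩
        rw [tadd_mem_iff] at hx ⊢
        rw [abs_sub_comm, add_comm] at hx; exact hx
      · rintro ⟨t, ht, hx⟩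
        refine ⟨a, rfl, t, ht, ?_⟩
        rw [tadd_mem_iff] at hx ⊢
        rw [abs_sub_comm, add_comm] at hx; exact hx
    rw [h1, h2, tadd_assoc_char, tadd_assoc_char]
    constructor <;> rintro ⟨p, q, r, s⟩ <;> refine ⟨by linarith, by linarith, by linarith, by linarith⟩
  · intro a
    ext x
    simp only [tadd, Set.mem_setOf_eq, Set.mem_singleton_iff, NNReal.coe_zero, zero_sub,
      abs_neg, abs_of_nonneg a.coe_nonneg, zero_add]
    constructor
    · rintro ⟨h1, h2⟩; exact NNReal.coe_injective (le_antisymm h2 h1)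
    · rintro rfl; exact ⟨le_refl _, le_refl _⟩
  · intro a x
    simp only [tadd, Set.mem_setOf_eq, NNReal.coe_zero]
    constructor
    · rintro ⟨h1, _⟩
      have := abs_nonpos_iff.mp h1
      exact NNReal.coe_injective (by linarith)
    · rintro rfl
      exact ⟨by simp, by positivity⟩
  · intro a b c
    rcases eq_or_ne a 0 with rfl | ha
    · ext x
      simp only [Set.mem_image, zero_mul, tadd, Set.mem_setOf_eq, NNReal.coe_zero, sub_zero,
        abs_zero, add_zero]
      constructor
      · rintro ⟨y, _, rfl⟩; simp
      · rintro ⟨h1, h2⟩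
        have : x = 0 := NNReal.coe_injective (le_antisymm h2 h1)
        exact ⟨b + c, ⟨abs_le.2 ⟨by push_cast; linarith [b.coe_nonneg, c.coe_nonneg],
          by push_cast; linarith [b.coe_nonneg, c.coe_nonneg]⟩, by push_cast; linarith⟩, this.symm⟩
    · have ha' : (0:ℝ) < a := NNReal.coe_pos.2 (pos_iff_ne_zero.mpr ha)
      ext x
      simp only [Set.mem_image, tadd, Set.mem_setOf_eq, NNReal.coe_mul]
      constructor
      · rintro ⟨y, ⟨h1, h2⟩, rfl⟩
        push_cast
        constructor
        · rw [← mul_sub, abs_mul, abs_of_pos ha']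
          exact mul_le_mul_of_nonneg_left h1 ha'.le
        · rw [← mul_add]
          exact mul_le_mul_of_nonneg_left h2 ha'.le
      · rintro ⟨h1, h2⟩
        refine ⟨x / a, ⟨?_, ?_⟩, by field_simp⟩
        · rw [NNReal.coe_div]
          rw [← mul_sub, abs_mul, abs_of_pos ha'] at h1
          rw [le_div_iff₀ ha', mul_comm]
          exact h1
        · rw [NNReal.coe_div, div_le_iff₀ ha']
          rw [← mul_add] at h2
          linarith [h2]
  · intro a ha
    exact ⟨a⁻¹, mul_inv_cancel₀ ha⟩
end

section
/- The triangle addition on ℝ≥0 is associative: for all a,b,c ∈ ℝ≥0, the sets (a⊞b)⊞c and a⊞(b⊞c) are equal, and each coincides with the set of x ∈ ℝ≥0 such that there is a (possibly degenerate) Euclidean quadrilateral with side lengths a,b,c,x, i.e., {x : max(0, a-b-c, b-a-c, c-a-b) ≤ x ≤ a+b+c}. -/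
open scoped NNReal

lemma tadd_comm (a b : ℝ≥0) : tadd a b = tadd b a := by
  ext x
  simp only [tadd, Set.mem_setOf_eq, abs_sub_comm]
  constructor <;> rintro ⟨h1, h2⟩ <;> exact ⟨h1, by linarith⟩

lemma setTadd_comm (A B : Set ℝ≥0) : setTadd A B = setTadd B A := by
  unfold setTadd
  ext x
  simp only [Set.mem_iUnion]
  constructor
  · rintro ⟨a, ha, b, hb, hx⟩; exact ⟨b, hb, a, ha, tadd_comm a b ▸ hx⟩
  · rintro ⟨a, ha, b, hb, hx⟩; exact ⟨b, hb, a, ha, tadd_comm a b ▸ hx⟩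

lemma key (a b c : ℝ≥0) :
    setTadd (tadd a b) {c} =
      {x : ℝ≥0 |
        max 0 (max ((a : ℝ) - b - c) (max ((b : ℝ) - a - c) ((c : ℝ) - a - b)))
          ≤ (x : ℝ) ∧ (x : ℝ) ≤ (a : ℝ) + b + c} := by
  ext x
  simp only [setTadd, tadd, Set.mem_iUnion, Set.mem_singleton_iff, Set.mem_setOf_eq,
    max_le_iff]
  constructor
  · rintro ⟨t, ⟨ht1, ht2⟩, d, rfl, hx1, hx2⟩
    rw [abs_le] at ht1 hx1
    refine ⟨⟨x.2, ?_, ?_, ?_⟩, by linarith⟩ <;> cases' abs_cases ((a:ℝ) - b) with h h <;>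
      linarith
  · rintro ⟨⟨h0, h1, h2, h3⟩, h4⟩
    set tr : ℝ := max (|(a:ℝ) - b|) (|(x:ℝ) - c|) with htr
    have htr0 : 0 ≤ tr := le_trans (abs_nonneg _) (le_max_left _ _)
    refine ⟨⟨tr, htr0⟩, ⟨?_, ?_⟩, c, rfl, ?_, ?_⟩
    · exact le_max_left _ _
    · show tr ≤ (a:ℝ) + b
      have ha := a.coe_nonneg; have hb := b.coe_nonneg; have hc := c.coe_nonneg
      have h1' : |(x:ℝ) - c| ≤ (a:ℝ) + b := by
        rw [abs_le]; constructor <;> linarith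
      have h2' : |(a:ℝ) - b| ≤ (a:ℝ) + b := by
        rw [abs_le]; constructor <;> linarith
      exact max_le h2' h1'
    · show |tr - (c:ℝ)| ≤ (x:ℝ)
      rw [abs_le]
      have h5 : |(a:ℝ) - b| ≤ (x:ℝ) + c := by
        rw [abs_le]; constructor <;> linarith
      have h6 := abs_le.1 (le_refl |(x:ℝ) - c|)
      constructor
      · have : -(x:ℝ) ≤ tr - c := by
          have := le_max_right (|(a:ℝ) - b|) (|(x:ℝ) - c|)
          have := neg_abs_le ((x:ℝ) - c)
          linarith
        linarith
      · have hc := c.coe_nonneg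
        have : tr ≤ (x:ℝ) + c := max_le h5 (by
          cases' abs_cases ((x:ℝ) - c) with h h <;> rw [h.1] <;> linarith)
        linarith
    · show tr + (c:ℝ) ≥ (x:ℝ)
      have := le_max_right (|(a:ℝ) - b|) (|(x:ℝ) - c|)
      have := le_abs_self ((x:ℝ) - c)
      linarith

/-- the triangle addition is associative, and both
`(a⊞b)⊞c` and `a⊞(b⊞c)` equal the set of side lengths `x` of (possibly
degenerate) Euclidean quadrilaterals with other side lengths `a,b,c`:
`{x : max(0, a-b-c, b-a-c, c-a-b) ≤ x ≤ a+b+c}`. -/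
theorem triangle_add_assoc (a b c : ℝ≥0) :
    setTadd (tadd a b) {c} = setTadd {a} (tadd b c) ∧
    setTadd (tadd a b) {c} =
      {x : ℝ≥0 |
        max 0 (max ((a : ℝ) - b - c) (max ((b : ℝ) - a - c) ((c : ℝ) - a - b)))
          ≤ (x : ℝ) ∧ (x : ℝ) ≤ (a : ℝ) + b + c} := by
  have h2 := key a b c
  have h3 : setTadd {a} (tadd b c) = setTadd (tadd b c) {a} := setTadd_comm _ _
  have h4 := key b c a
  refine ⟨?_, h2⟩
  rw [h2, h3, h4]
  ext x
  simp only [Set.mem_setOf_eq, max_le_iff]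
  constructor <;> rintro ⟨⟨p0, p1, p2, p3⟩, p4⟩ <;> exact ⟨⟨p0, by linarith, by linarith, by linarith⟩, by linarith⟩
end

section
/- The triangle hyperfield is not doubly distributive: for the triangle addition ⊞ on ℝ≥0, (2⊞1)·(2⊞1) = [1,9], while (2·2)⊞(2·1)⊞(1·2)⊞(1·1) = 4⊞2⊞2⊞1 = [0,9]; in particular these sets are not equal. -/
/-! The product `(2⊞1)·(2⊞1) = [1,3]·[1,3]` is a continuous image of a connected set, hence the
whole interval `[1,9]`. On the other side `4⊞2 = [2,6]`, and adding to an interval `[a,b]` a point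
`c` of it gives `[0, b+c]`, since `0 ∈ c⊞c`; so `4⊞2⊞2⊞1 = [0,9]`, which contains `0`. -/

open scoped NNReal

open Set

theorem image2_mul_Icc {α : Type*} [ConditionallyCompleteLinearOrder α] [TopologicalSpace α]
    [OrderTopology α] [DenselyOrdered α] [Mul α] [ContinuousMul α] [MulLeftMono α]
    [MulRightMono α] {a b c d : α} (hab : a ≤ b) (hcd : c ≤ d) :
    image2 (· * ·) (Icc a b) (Icc c d) = Icc (a * c) (b * d) := by
  refine Subset.antisymm ?_ ?_
  · rintro _ ⟨x, hx, y, hy, rfl⟩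
    exact ⟨mul_le_mul' hx.1 hy.1, mul_le_mul' hx.2 hy.2⟩
  · have hconn : IsPreconnected (image2 (· * ·) (Icc a b) (Icc c d)) := by
      rw [← image_uncurry_prod]
      exact (isPreconnected_Icc.prod isPreconnected_Icc).image _ continuous_mul.continuousOn
    exact hconn.Icc_subset (mem_image2_of_mem (left_mem_Icc.2 hab) (left_mem_Icc.2 hcd))
      (mem_image2_of_mem (right_mem_Icc.2 hab) (right_mem_Icc.2 hcd))

theorem mem_tadd_iff {a b c : ℝ≥0} :
    c ∈ tadd a b ↔ (a : ℝ) ≤ b + c ∧ (b : ℝ) ≤ a + c ∧ (c : ℝ) ≤ a + b := by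
  rw [tadd, mem_ofPred_eq, abs_sub_le_iff, and_assoc]
  constructor <;> rintro ⟨h₁, h₂, h₃⟩ <;> refine ⟨?_, ?_, h₃⟩ <;> linarith

theorem mem_setTadd_iff {A B : Set ℝ≥0} {c : ℝ≥0} :
    c ∈ setTadd A B ↔ ∃ a ∈ A, ∃ b ∈ B, c ∈ tadd a b := by
  simp only [setTadd, mem_iUnion, exists_prop]

theorem tadd_eq_Icc_of_le {a b : ℝ≥0} (h : b ≤ a) : tadd a b = Icc (a - b) (a + b) := by
  ext c
  rw [mem_tadd_iff, mem_Icc, ← NNReal.coe_le_coe, ← NNReal.coe_le_coe, NNReal.coe_sub h,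
    NNReal.coe_add]
  constructor
  · rintro ⟨h₁, -, h₃⟩
    constructor <;> linarith
  · rintro ⟨h₁, h₃⟩
    have hba : (b : ℝ) ≤ a := h
    refine ⟨?_, ?_, h₃⟩ <;> linarith [c.coe_nonneg]

theorem setTadd_Icc_singleton {a b c : ℝ≥0} (hc : c ∈ Icc a b) :
    setTadd (Icc a b) {c} = Icc 0 (b + c) := by
  ext z
  simp only [mem_setTadd_iff, mem_singleton_iff, exists_eq_left, mem_Icc, zero_le, true_and]
  constructor
  · rintro ⟨x, ⟨-, hxb⟩, hz⟩
    have hxb' : (x : ℝ) ≤ b := hxb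
    rw [← NNReal.coe_le_coe, NNReal.coe_add]
    linarith [(mem_tadd_iff.1 hz).2.2]
  · intro hz
    -- `x = min b (c + z)` lies in `[a, b]`, and `z ∈ x ⊞ c` because `c ≤ x ≤ c + z`.
    refine ⟨min b (c + z), ⟨le_min (hc.1.trans hc.2) (hc.1.trans le_self_add),
      min_le_left _ _⟩, mem_tadd_iff.2 ?_⟩
    have hcb : (c : ℝ) ≤ b := hc.2
    have hz' : (z : ℝ) ≤ b + c := by exact_mod_cast hz
    rw [NNReal.coe_min, NNReal.coe_add]
    rcases min_cases (b : ℝ) (c + z) with ⟨hmin, -⟩ | ⟨hmin, -⟩ <;> rw [hmin] <;>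
      refine ⟨?_, ?_, ?_⟩ <;> linarith [z.coe_nonneg, min_le_right (b : ℝ) (c + z)]

/-- the triangle hyperfield is not doubly distributive:
`(2⊞1)·(2⊞1) = [1,9]`, while `(2·2)⊞(2·1)⊞(1·2)⊞(1·1) = [0,9]`;
in particular these sets are not equal. -/
theorem triangle_not_doubly_distributive :
    Set.image2 (· * ·) (tadd 2 1) (tadd 2 1) = Set.Icc (1 : ℝ≥0) 9 ∧
    setTadd (setTadd (tadd (2 * 2) (2 * 1)) {1 * 2}) {1 * 1} = Set.Icc (0 : ℝ≥0) 9 ∧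
    Set.image2 (· * ·) (tadd 2 1) (tadd 2 1) ≠
      setTadd (setTadd (tadd (2 * 2) (2 * 1)) {1 * 2}) {1 * 1} := by
  have hprod : image2 (· * ·) (tadd 2 1) (tadd 2 1) = Icc (1 : ℝ≥0) 9 := by
    rw [tadd_eq_Icc_of_le one_le_two, tsub_eq_of_eq_add one_add_one_eq_two.symm,
      image2_mul_Icc (by norm_num) (by norm_num)]
    norm_num
  have hsum : setTadd (setTadd (tadd (2 * 2) (2 * 1)) {1 * 2}) {1 * 1} = Icc (0 : ℝ≥0) 9 := by
    rw [tadd_eq_Icc_of_le (by norm_num), one_mul, one_mul,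
      setTadd_Icc_singleton (by norm_num), setTadd_Icc_singleton (by norm_num)]
    norm_num
  refine ⟨hprod, hsum, ?_⟩
  rw [hprod, hsum, Ne, Icc_eq_Icc_iff (by norm_num)]
  norm_num
end

section
/- The tropical addition of complex numbers is associative: for all a,b,c ∈ ℂ, (a⊞b)⊞c = a⊞(b⊞c), where the operation is extended elementwise to subsets. -/
open Classical in
/-- The shortest arc connecting `a` and `b` on the circle `{z : |z| = |a|}`
(for `|a| = |b|`, `a + b ≠ 0`): the points of the circle lying on the cone
of nonnegative combinations of `a` and `b`. -/
noncomputable def arc (a b : ℂ) : Set ℂ :=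
  {c | ‖c‖ = ‖a‖ ∧
    ∃ l m : ℝ, 0 ≤ l ∧ 0 ≤ m ∧ c = (l : ℂ) * a + (m : ℂ) * b}

open Classical in
/-- The tropical sum of two complex numbers. -/
noncomputable def tropAdd (a b : ℂ) : Set ℂ :=
  if ‖b‖ < ‖a‖ then {a}
  else if ‖a‖ < ‖b‖ then {b}
  else if a + b = 0 then {c | ‖c‖ ≤ ‖a‖}
  else arc a b

/-- Elementwise extension of the tropical addition to subsets. -/
def setTrop (A B : Set ℂ) : Set ℂ :=
  ⋃ a ∈ A, ⋃ b ∈ B, tropAdd a b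

/-!
Since `⊞` is commutative, associativity says that `(a ⊞ b) ⊞ c` is unchanged when `a` and `c`
are swapped, and by symmetry we may assume `|a| ≤ |c|`. An element of strictly smaller modulus
than another is absorbed, which settles every case except `|a| = |b| = |c| = r`. There, either
`-c ∈ a ⊞ b`, which happens exactly when `-a ∈ c ⊞ b`, and both sides are the disk of radius `r`;
or no cancellation occurs and both sides are the points of modulus `r` in the cone spanned by
`a`, `b`, `c`.
-/

def arc3 (a b c : ℂ) : Set ℂ :=
  {z | ‖z‖ = ‖a‖ ∧ ∃ l m n : ℝ, 0 ≤ l ∧ 0 ≤ m ∧ 0 ≤ n ∧ z = l * a + m * b + n * c}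

lemma self_mem_arc (a b : ℂ) : a ∈ arc a b :=
  ⟨rfl, 1, 0, zero_le_one, le_rfl, by simp⟩

lemma mem_arc_right {a b : ℂ} (h : ‖b‖ = ‖a‖) : b ∈ arc a b :=
  ⟨h, 0, 1, le_rfl, zero_le_one, by simp⟩

lemma arc_comm {a b : ℂ} (h : ‖a‖ = ‖b‖) : arc a b = arc b a := by
  ext z
  constructor <;> rintro ⟨hz, l, m, hl, hm, rfl⟩
  · exact ⟨hz.trans h, m, l, hm, hl, add_comm _ _⟩
  · exact ⟨hz.trans h.symm, m, l, hm, hl, add_comm _ _⟩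

lemma arc3_swap {a b c : ℂ} (hac : ‖a‖ = ‖c‖) : arc3 a b c = arc3 c b a := by
  ext z
  constructor <;> rintro ⟨hz, l, m, n, hl, hm, hn, rfl⟩
  · exact ⟨hz.trans hac, n, m, l, hn, hm, hl, by ring⟩
  · exact ⟨hz.trans hac.symm, n, m, l, hn, hm, hl, by ring⟩

lemma biUnion_arc_arc {a b : ℂ} (hab : ‖a‖ = ‖b‖) (c : ℂ) :
    ⋃ x ∈ arc a b, arc x c = arc3 a b c := by
  ext z
  simp only [Set.mem_iUnion, exists_prop]
  constructor
  · rintro ⟨x, ⟨hx, l, m, hl, hm, rfl⟩, hz, p, q, hp, hq, rfl⟩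
    exact ⟨hz.trans hx, p * l, p * m, q, by positivity, by positivity, hq, by push_cast; ring⟩
  rintro ⟨hz, l, m, n, hl, hm, hn, rfl⟩
  set w : ℂ := l * a + m * b
  by_cases hw : w = 0
  · exact ⟨a, self_mem_arc a b, hz, 0, n, le_rfl, hn, by simp [hw]⟩
  have ha : ‖a‖ ≠ 0 := by
    intro ha
    have hb : b = 0 := norm_eq_zero.mp (hab ▸ ha)
    exact hw (by simp [w, norm_eq_zero.mp ha, hb])
  have hw' : ‖w‖ ≠ 0 := norm_ne_zero_iff.mpr hw
  set x : ℂ := ((‖a‖ / ‖w‖ : ℝ) : ℂ) * w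
  have hx : ‖x‖ = ‖a‖ := by
    rw [norm_mul, Complex.norm_real, Real.norm_of_nonneg (by positivity), div_mul_cancel₀ _ hw']
  refine ⟨x, ⟨hx, ‖a‖ / ‖w‖ * l, ‖a‖ / ‖w‖ * m, by positivity, by positivity, ?_⟩,
    hz.trans hx.symm, ‖w‖ / ‖a‖, n, by positivity, hn, ?_⟩
  · simp only [x, w]; push_cast; ring
  · have : ‖w‖ / ‖a‖ * (‖a‖ / ‖w‖) = 1 := by field_simp
    rw [← mul_assoc, ← Complex.ofReal_mul, this, Complex.ofReal_one, one_mul]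

lemma tropAdd_eq_left {a b : ℂ} (h : ‖b‖ < ‖a‖) : tropAdd a b = {a} := by
  simp [tropAdd, h]

lemma tropAdd_eq_right {a b : ℂ} (h : ‖a‖ < ‖b‖) : tropAdd a b = {b} := by
  simp [tropAdd, h, h.not_gt]

lemma tropAdd_eq_ball {a b : ℂ} (h : a + b = 0) : tropAdd a b = {z | ‖z‖ ≤ ‖a‖} := by
  obtain rfl : b = -a := eq_neg_of_add_eq_zero_right h
  simp [tropAdd]

lemma tropAdd_eq_arc {a b : ℂ} (h : ‖a‖ = ‖b‖) (h0 : a + b ≠ 0) : tropAdd a b = arc a b := by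
  simp [tropAdd, h, h0]

lemma tropAdd_comm (a b : ℂ) : tropAdd a b = tropAdd b a := by
  rcases lt_trichotomy ‖a‖ ‖b‖ with h | h | h
  · rw [tropAdd_eq_right h, tropAdd_eq_left h]
  · by_cases h0 : a + b = 0
    · rw [tropAdd_eq_ball h0, tropAdd_eq_ball (by rwa [add_comm]), h]
    · rw [tropAdd_eq_arc h h0, tropAdd_eq_arc h.symm (by rwa [add_comm]), arc_comm h]
  · rw [tropAdd_eq_left h, tropAdd_eq_right h]

lemma norm_le_of_mem_tropAdd {x a b : ℂ} (h : x ∈ tropAdd a b) : ‖x‖ ≤ max ‖a‖ ‖b‖ := by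
  unfold tropAdd at h
  split_ifs at h
  · rw [Set.mem_singleton_iff.mp h]
    exact le_max_left _ _
  · rw [Set.mem_singleton_iff.mp h]
    exact le_max_right _ _
  · exact h.trans (le_max_left _ _)
  · exact h.1.le.trans (le_max_left _ _)

lemma mem_tropAdd_right {a b : ℂ} (h : ‖a‖ ≤ ‖b‖) : b ∈ tropAdd a b := by
  rcases h.lt_or_eq with h | h
  · simp [tropAdd_eq_right h]
  by_cases h0 : a + b = 0
  · rw [tropAdd_eq_ball h0]
    exact h.ge
  · rw [tropAdd_eq_arc h h0]
    exact mem_arc_right h.symm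

lemma tropAdd_nonempty (a b : ℂ) : (tropAdd a b).Nonempty := by
  rcases le_total ‖a‖ ‖b‖ with h | h
  · exact ⟨b, mem_tropAdd_right h⟩
  · exact ⟨a, tropAdd_comm a b ▸ mem_tropAdd_right h⟩

lemma neg_mem_tropAdd_swap {a b c : ℂ} (hab : ‖a‖ = ‖b‖) (hbc : ‖b‖ = ‖c‖)
    (h : -c ∈ tropAdd a b) : -a ∈ tropAdd c b := by
  by_cases hcb : c + b = 0
  · rw [tropAdd_eq_ball hcb]
    show ‖-a‖ ≤ ‖c‖
    rw [norm_neg, hab, hbc]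
  rw [tropAdd_eq_arc hbc.symm hcb]
  by_cases hab0 : a + b = 0
  · rw [neg_eq_of_add_eq_zero_right hab0]
    exact mem_arc_right hbc
  rw [tropAdd_eq_arc hab hab0] at h
  obtain ⟨-, l, m, hl, hm, hlm⟩ := h
  rcases hl.lt_or_eq with hl | rfl
  · refine ⟨by rw [norm_neg, hab, hbc], 1 / l, m / l, by positivity, by positivity, ?_⟩
    have : (l : ℂ) ≠ 0 := by exact_mod_cast hl.ne'
    push_cast
    field_simp
    linear_combination hlm
  -- `-c = m b` with `|c| = |b| ≠ 0` forces `m = 1`, i.e. `c + b = 0`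
  have hb : ‖b‖ ≠ 0 := fun hb => hcb (by simp [norm_eq_zero.mp hb, norm_eq_zero.mp (hbc ▸ hb)])
  have hm1 : m = 1 := by
    have := congrArg norm hlm
    rw [norm_neg, Complex.ofReal_zero, zero_mul, zero_add, norm_mul, Complex.norm_real, Real.norm_of_nonneg hm,
      ← hbc] at this
    exact (mul_eq_right₀ hb).mp this.symm
  subst hm1
  exact absurd (by push_cast at hlm; linear_combination -hlm) hcb

lemma setTrop_comm (A B : Set ℂ) : setTrop A B = setTrop B A := by
  unfold setTrop
  rw [Set.iUnion₂_comm]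
  simp_rw [tropAdd_comm]

lemma setTrop_singleton_right (A : Set ℂ) (c : ℂ) : setTrop A {c} = ⋃ x ∈ A, tropAdd x c := by
  simp [setTrop]

lemma setTrop_singleton_singleton (a c : ℂ) : setTrop {a} {c} = tropAdd a c := by
  simp [setTrop]

lemma setTrop_singleton_subset_ball {A : Set ℂ} {c : ℂ} {R : ℝ} (hA : ∀ x ∈ A, ‖x‖ ≤ R)
    (hc : ‖c‖ ≤ R) : setTrop A {c} ⊆ {z | ‖z‖ ≤ R} := by
  rw [setTrop_singleton_right, Set.iUnion₂_subset_iff]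
  exact fun x hx z hz => (norm_le_of_mem_tropAdd hz).trans (max_le (hA x hx) hc)

lemma setTrop_singleton_of_forall_norm_lt {A : Set ℂ} {c : ℂ} (hne : A.Nonempty)
    (h : ∀ x ∈ A, ‖x‖ < ‖c‖) : setTrop A {c} = {c} := by
  obtain ⟨x₀, hx₀⟩ := hne
  rw [setTrop_singleton_right]
  refine Set.Subset.antisymm (Set.iUnion₂_subset fun x hx => (tropAdd_eq_right (h x hx)).le) ?_
  rw [Set.singleton_subset_iff, Set.mem_iUnion₂]
  exact ⟨x₀, hx₀, by simp [tropAdd_eq_right (h x₀ hx₀)]⟩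

lemma setTrop_singleton_of_forall_norm_gt {A : Set ℂ} {c : ℂ} (h : ∀ x ∈ A, ‖c‖ < ‖x‖) :
    setTrop A {c} = A := by
  rw [setTrop_singleton_right]
  calc ⋃ x ∈ A, tropAdd x c = ⋃ x ∈ A, {x} := Set.iUnion₂_congr fun x hx => tropAdd_eq_left (h x hx)
    _ = A := Set.biUnion_of_singleton A

lemma setTrop_ball_singleton {c : ℂ} {R : ℝ} (hc : ‖c‖ ≤ R) :
    setTrop {z | ‖z‖ ≤ R} {c} = {z | ‖z‖ ≤ R} := by
  refine Set.Subset.antisymm (setTrop_singleton_subset_ball (fun _ hx => hx) hc) fun z hz => ?_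
  rw [setTrop_singleton_right, Set.mem_iUnion₂]
  by_cases hzc : ‖z‖ ≤ ‖c‖
  · exact ⟨-c, by simpa using hc, by rw [tropAdd_eq_ball (neg_add_cancel c)]; simpa using hzc⟩
  · exact ⟨z, hz, by simp [tropAdd_eq_left (not_le.mp hzc)]⟩

lemma setTrop_singleton_of_neg_mem {A : Set ℂ} {c : ℂ} (hA : ∀ x ∈ A, ‖x‖ ≤ ‖c‖) (hc : -c ∈ A) :
    setTrop A {c} = {z | ‖z‖ ≤ ‖c‖} := by
  refine Set.Subset.antisymm (setTrop_singleton_subset_ball hA le_rfl) fun z hz => ?_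
  rw [setTrop_singleton_right, Set.mem_iUnion₂]
  exact ⟨-c, hc, by rwa [tropAdd_eq_ball (neg_add_cancel c), norm_neg]⟩

lemma setTrop_tropAdd_singleton_of_norm_lt {a b : ℂ} (h : ‖a‖ < ‖b‖) (c : ℂ) :
    setTrop (tropAdd b c) {a} = tropAdd b c := by
  rcases lt_trichotomy ‖b‖ ‖c‖ with hbc | hbc | hbc
  · rw [tropAdd_eq_right hbc, setTrop_singleton_singleton, tropAdd_eq_left (h.trans hbc)]
  · by_cases h0 : b + c = 0
    · rw [tropAdd_eq_ball h0, setTrop_ball_singleton h.le]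
    · rw [tropAdd_eq_arc hbc h0]
      exact setTrop_singleton_of_forall_norm_gt fun x hx => hx.1 ▸ h
  · rw [tropAdd_eq_left hbc, setTrop_singleton_singleton, tropAdd_eq_left h]

lemma setTrop_tropAdd_singleton_eq_arc3 {a b c : ℂ} (hab : ‖a‖ = ‖b‖) (hbc : ‖b‖ = ‖c‖)
    (hc : -c ∉ tropAdd a b) : setTrop (tropAdd a b) {c} = arc3 a b c := by
  have hab0 : a + b ≠ 0 := fun h0 => hc <| by
    rw [tropAdd_eq_ball h0]
    show ‖-c‖ ≤ ‖a‖
    rw [norm_neg, hab, hbc]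
  rw [tropAdd_eq_arc hab hab0] at hc ⊢
  rw [setTrop_singleton_right, ← biUnion_arc_arc hab c]
  refine Set.iUnion₂_congr fun x hx => tropAdd_eq_arc (by rw [hx.1, hab, hbc]) fun hxc => ?_
  exact hc (neg_eq_of_add_eq_zero_left hxc ▸ hx)

lemma setTrop_tropAdd_singleton_swap_of_norm_eq {a b c : ℂ} (hab : ‖a‖ = ‖b‖)
    (hbc : ‖b‖ = ‖c‖) : setTrop (tropAdd a b) {c} = setTrop (tropAdd c b) {a} := by
  have hA : ∀ x ∈ tropAdd a b, ‖x‖ ≤ ‖c‖ := fun x hx =>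
    (norm_le_of_mem_tropAdd hx).trans (by rw [hab, hbc, max_self])
  have hC : ∀ x ∈ tropAdd c b, ‖x‖ ≤ ‖a‖ := fun x hx =>
    (norm_le_of_mem_tropAdd hx).trans (by rw [hab, hbc, max_self])
  by_cases hc : -c ∈ tropAdd a b
  · rw [setTrop_singleton_of_neg_mem hA hc,
      setTrop_singleton_of_neg_mem hC (neg_mem_tropAdd_swap hab hbc hc), hab, hbc]
  · have ha : -a ∉ tropAdd c b := fun ha => hc (neg_mem_tropAdd_swap hbc.symm hab.symm ha)
    rw [setTrop_tropAdd_singleton_eq_arc3 hab hbc hc,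
      setTrop_tropAdd_singleton_eq_arc3 hbc.symm hab.symm ha, arc3_swap (hab.trans hbc)]

lemma setTrop_tropAdd_singleton_swap (a b c : ℂ) :
    setTrop (tropAdd a b) {c} = setTrop (tropAdd c b) {a} := by
  wlog hac : ‖a‖ ≤ ‖c‖ generalizing a c
  · exact (this c a (le_of_not_ge hac)).symm
  rcases lt_or_ge ‖a‖ ‖b‖ with hab | hba
  · rw [tropAdd_eq_right hab, setTrop_singleton_singleton, tropAdd_comm c b,
      setTrop_tropAdd_singleton_of_norm_lt hab]
  rcases hac.lt_or_eq with hac | hac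
  · have hA : ∀ x ∈ tropAdd a b, ‖x‖ < ‖c‖ := fun x hx =>
      (norm_le_of_mem_tropAdd hx).trans_lt (max_lt hac (hba.trans_lt hac))
    rw [setTrop_singleton_of_forall_norm_lt (tropAdd_nonempty a b) hA,
      tropAdd_eq_left (hba.trans_lt hac), setTrop_singleton_singleton, tropAdd_eq_left hac]
  rcases hba.lt_or_eq with hba | hba
  · rw [tropAdd_eq_left hba, tropAdd_eq_left (hac ▸ hba), setTrop_singleton_singleton,
      setTrop_singleton_singleton, tropAdd_comm]
  · exact setTrop_tropAdd_singleton_swap_of_norm_eq hba.symm (hba.trans hac)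

/-- the tropical addition of complex numbers is associative. -/
theorem tropAdd_assoc (a b c : ℂ) :
    setTrop (tropAdd a b) {c} = setTrop {a} (tropAdd b c) := by
  rw [setTrop_comm {a}, tropAdd_comm b c]
  exact setTrop_tropAdd_singleton_swap a b c
end

section
/- The real line ℝ, with the induced tropical addition a⊞b = {a} if |a|>|b|, {b} if |a|<|b|, {a} if a=b, and the interval [-|a|,|a|] if a=-b, together with the usual multiplication, is a doubly distributive hyperfield: in particular (a⊞b)·(c⊞d) = (ac)⊞(ad)⊞(bc)⊞(bd) for all a,b,c,d ∈ ℝ. -/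
/-- The tropical addition of real numbers, induced from the complex tropical
hyperfield: `a⊞b = {a}` if `|a|>|b|`, `{b}` if `|a|<|b|`, `{a}` if `a=b`,
and the interval `[-|a|,|a|]` if `a=-b`. -/
noncomputable def rAdd (a b : ℝ) : Set ℝ :=
  if |b| < |a| then {a}
  else if |a| < |b| then {b}
  else if a = b then {a}
  else Set.Icc (-|a|) |a|

/-- Elementwise extension of the real tropical addition to subsets. -/
def setRAdd (A B : Set ℝ) : Set ℝ :=
  ⋃ a ∈ A, ⋃ b ∈ B, rAdd a b

/-!
The hypersum of finitely many reals depends only on the set `s` of summands: if `y` is a summand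
of largest absolute value, it is `[-|y|, |y|]` when `-y` is a summand too, and `{y}` otherwise.
Both bracketings of `a ⊞ b ⊞ c` therefore equal the hypersum of `{a, b, c}`. This hypersum is
multiplicative, `(⊞ s) · (⊞ t) = ⊞ (s · t)`: the largest absolute value in `s · t` is `|y| |w|`,
and it is attained with both signs exactly when this happens in `s` or in `t`. Taking `s = {a}`
gives distributivity, and `s = {a, b}`, `t = {c, d}` gives double distributivity.
-/

open Set

lemma rAdd_of_abs_lt {a b : ℝ} (h : |b| < |a|) : rAdd a b = {a} := if_pos h

lemma rAdd_of_abs_lt' {a b : ℝ} (h : |a| < |b|) : rAdd a b = {b} := by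
  rw [rAdd, if_neg h.not_gt, if_pos h]

lemma rAdd_self (a : ℝ) : rAdd a a = {a} := by
  simp [rAdd]

lemma rAdd_of_abs_le {a b : ℝ} (h : |b| ≤ |a|) (hb : b ≠ -a) : rAdd a b = {a} := by
  rcases h.lt_or_eq with hlt | heq
  · exact rAdd_of_abs_lt hlt
  · rcases abs_eq_abs.1 heq with rfl | rfl
    exacts [rAdd_self b, absurd rfl hb]

lemma rAdd_neg_right (a : ℝ) : rAdd a (-a) = Icc (-|a|) |a| := by
  by_cases ha : a = 0
  · simp [ha, rAdd_self]
  · have : a ≠ -a := fun h => ha (by linarith)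
    simp [rAdd, this]

/-- `⊞ s`, the hypersum of the elements of a finite nonempty set `s`. -/
def tropSum (s : Set ℝ) : Set ℝ :=
  {x | ∃ y ∈ s, (∀ z ∈ s, |z| ≤ |y|) ∧ (x = y ∨ -y ∈ s ∧ |x| ≤ |y|)}

section TropSum

variable {s t : Set ℝ} {y w : ℝ}

lemma mem_tropSum (hy : y ∈ s) (hmax : ∀ z ∈ s, |z| ≤ |y|) : y ∈ tropSum s :=
  ⟨y, hy, hmax, Or.inl rfl⟩

lemma exists_abs_le_of_mem_tropSum {x : ℝ} (hx : x ∈ tropSum s) : ∃ y ∈ s, |x| ≤ |y| := by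
  obtain ⟨y, hy, -, rfl | ⟨-, hxy⟩⟩ := hx
  exacts [⟨x, hy, le_rfl⟩, ⟨y, hy, hxy⟩]

lemma tropSum_eq_Icc (hy : y ∈ s) (hmax : ∀ z ∈ s, |z| ≤ |y|) (hneg : -y ∈ s) :
    tropSum s = Icc (-|y|) |y| := by
  ext x
  refine ⟨fun ⟨y', hy', hmax', hx⟩ => ?_, fun hx => ⟨y, hy, hmax, Or.inr ⟨hneg, abs_le.2 hx⟩⟩⟩
  rw [mem_Icc, ← abs_le, ← le_antisymm (hmax y' hy') (hmax' y hy)]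
  rcases hx with rfl | ⟨-, hx⟩
  exacts [le_rfl, hx]

lemma tropSum_eq_singleton (hy : y ∈ s) (hmax : ∀ z ∈ s, |z| ≤ |y|) (hneg : -y ∉ s) :
    tropSum s = {y} := by
  ext x
  refine ⟨fun ⟨y', hy', hmax', hx⟩ => ?_, fun hx => hx ▸ mem_tropSum hy hmax⟩
  rcases abs_eq_abs.1 (le_antisymm (hmax y' hy') (hmax' y hy)) with rfl | rfl
  · rcases hx with rfl | ⟨h, -⟩
    exacts [rfl, absurd h hneg]
  · exact absurd hy' hneg

lemma tropSum_singleton (a : ℝ) : tropSum {a} = {a} := by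
  have hmax : ∀ z ∈ ({a} : Set ℝ), |z| ≤ |a| := by rintro z rfl; rfl
  by_cases ha : a = 0
  · rw [tropSum_eq_Icc (mem_singleton a) hmax (by simp [ha])]
    simp [ha]
  · exact tropSum_eq_singleton (mem_singleton a) hmax (by simpa [neg_eq_self] using ha)

lemma tropSum_pair_of_abs_lt {a b : ℝ} (h : |b| < |a|) : tropSum {a, b} = {a} := by
  refine tropSum_eq_singleton (mem_insert a {b}) (by simpa using h.le) ?_
  rintro (h' | h')
  · rw [neg_eq_self.1 h', abs_zero] at h
    exact (abs_nonneg b).not_gt h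
  · rw [← mem_singleton_iff.1 h', abs_neg] at h
    exact lt_irrefl _ h

lemma tropSum_nonempty (hs : s.Finite) (hne : s.Nonempty) : (tropSum s).Nonempty := by
  obtain ⟨y, hy, hmax⟩ := s.exists_max_image abs hs hne
  exact ⟨y, mem_tropSum hy hmax⟩

lemma image2_mul_Icc_abs {B : Set ℝ} {w : ℝ} (y : ℝ) (hw : w ∈ B) (hB : ∀ b ∈ B, |b| ≤ |w|) :
    image2 (· * ·) (Icc (-|y|) |y|) B = Icc (-|y * w|) |y * w| := by
  ext x
  simp only [mem_image2, mem_Icc, ← abs_le]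
  refine ⟨fun ⟨a, ha, b, hb, hx⟩ => ?_, fun hx => ?_⟩
  · rw [← hx, abs_mul, abs_mul]
    exact mul_le_mul ha (hB b hb) (abs_nonneg b) (abs_nonneg y)
  · rcases eq_or_ne w 0 with rfl | hw0
    · refine ⟨0, by simp, 0, hw, ?_⟩
      simpa [eq_comm] using hx
    · refine ⟨x / w, ?_, w, hw, div_mul_cancel₀ x hw0⟩
      rwa [abs_div, div_le_iff₀ (abs_pos.2 hw0), ← abs_mul]

lemma neg_mul_notMem_image2_mul (hy : y ∈ s) (hmaxs : ∀ z ∈ s, |z| ≤ |y|) (hy' : -y ∉ s)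
    (hw : w ∈ t) (hmaxt : ∀ z ∈ t, |z| ≤ |w|) (hw' : -w ∉ t) :
    -(y * w) ∉ image2 (· * ·) s t := by
  have hy0 : y ≠ 0 := by rintro rfl; simp [hy] at hy'
  have hw0 : w ≠ 0 := by rintro rfl; simp [hw] at hw'
  rintro ⟨a, ha, b, hb, hab : a * b = -(y * w)⟩
  have habs : |a| * |b| = |y| * |w| := by rw [← abs_mul, ← abs_mul, hab, abs_neg]
  have hay : |a| = |y| := by
    by_contra hne
    have := mul_lt_mul_of_lt_of_le_of_nonneg_of_pos ((hmaxs a ha).lt_of_ne hne) (hmaxt b hb)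
      (abs_nonneg a) (abs_pos.2 hw0)
    exact this.ne habs
  have hbw : |b| = |w| := by
    have := abs_pos.2 hy0
    rw [hay] at habs
    exact mul_left_cancel₀ this.ne' habs
  obtain rfl : a = y := (abs_eq_abs.1 hay).resolve_right fun h => hy' (h ▸ ha)
  obtain rfl : b = w := (abs_eq_abs.1 hbw).resolve_right fun h => hw' (h ▸ hb)
  exact mul_ne_zero hy0 hw0 (by linarith)

lemma image2_mul_tropSum (hs : s.Finite) (hs' : s.Nonempty) (ht : t.Finite) (ht' : t.Nonempty) :
    image2 (· * ·) (tropSum s) (tropSum t) = tropSum (image2 (· * ·) s t) := by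
  obtain ⟨y, hy, hmaxs⟩ := s.exists_max_image abs hs hs'
  obtain ⟨w, hw, hmaxt⟩ := t.exists_max_image abs ht ht'
  have hyw : y * w ∈ image2 (· * ·) s t := mem_image2_of_mem hy hw
  have hmax : ∀ z ∈ image2 (· * ·) s t, |z| ≤ |y * w| := by
    rintro _ ⟨a, ha, b, hb, rfl⟩
    rw [abs_mul, abs_mul]
    exact mul_le_mul (hmaxs a ha) (hmaxt b hb) (abs_nonneg b) (abs_nonneg y)
  have bound {u : Set ℝ} {v : ℝ} (hmaxu : ∀ z ∈ u, |z| ≤ |v|) :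
      ∀ x ∈ tropSum u, |x| ≤ |v| := fun x hx => by
    obtain ⟨z, hz, hxz⟩ := exists_abs_le_of_mem_tropSum hx
    exact hxz.trans (hmaxu z hz)
  by_cases hy' : -y ∈ s
  · rw [tropSum_eq_Icc hy hmaxs hy', image2_mul_Icc_abs y (mem_tropSum hw hmaxt) (bound hmaxt),
      tropSum_eq_Icc hyw hmax (neg_mul y w ▸ mem_image2_of_mem hy' hw)]
  by_cases hw' : -w ∈ t
  · rw [image2_comm mul_comm, tropSum_eq_Icc hw hmaxt hw',
      image2_mul_Icc_abs w (mem_tropSum hy hmaxs) (bound hmaxs), mul_comm w y,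
      tropSum_eq_Icc hyw hmax (mul_neg y w ▸ mem_image2_of_mem hy hw')]
  rw [tropSum_eq_singleton hy hmaxs hy', tropSum_eq_singleton hw hmaxt hw', image2_singleton,
    tropSum_eq_singleton hyw hmax (neg_mul_notMem_image2_mul hy hmaxs hy' hw hmaxt hw')]

end TropSum

lemma rAdd_eq_tropSum (a b : ℝ) : rAdd a b = tropSum {a, b} := by
  rcases lt_trichotomy |b| |a| with h | h | h
  · rw [rAdd_of_abs_lt h, tropSum_pair_of_abs_lt h]
  · rcases abs_eq_abs.1 h with rfl | rfl
    · rw [rAdd_self, pair_eq_singleton, tropSum_singleton]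
    · rw [rAdd_neg_right, tropSum_eq_Icc (mem_insert a _) (by simp) (by simp)]
  · rw [rAdd_of_abs_lt' h, pair_comm, tropSum_pair_of_abs_lt h]

lemma rAdd_comm (a b : ℝ) : rAdd a b = rAdd b a := by
  rw [rAdd_eq_tropSum, rAdd_eq_tropSum, pair_comm]

lemma rAdd_nonempty (a b : ℝ) : (rAdd a b).Nonempty := by
  rw [rAdd_eq_tropSum]
  exact tropSum_nonempty (toFinite _) (insert_nonempty _ _)

lemma zero_rAdd (a : ℝ) : rAdd 0 a = {a} := by
  rcases eq_or_ne a 0 with rfl | ha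
  · exact rAdd_self 0
  · exact rAdd_of_abs_lt' (by simpa using ha)

lemma zero_mem_rAdd_iff (a x : ℝ) : 0 ∈ rAdd a x ↔ x = -a := by
  refine ⟨fun h => ?_, fun h => by simp [h, rAdd_neg_right]⟩
  rcases lt_trichotomy |x| |a| with hlt | heq | hlt
  · rw [rAdd_of_abs_lt hlt, mem_singleton_iff] at h
    rw [← h, abs_zero] at hlt
    exact absurd hlt (abs_nonneg x).not_gt
  · rcases abs_eq_abs.1 heq with rfl | rfl
    · rw [rAdd_self, mem_singleton_iff] at h
      simp [← h]
    · rfl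
  · rw [rAdd_of_abs_lt' hlt, mem_singleton_iff] at h
    rw [← h, abs_zero] at hlt
    exact absurd hlt (abs_nonneg a).not_gt

lemma setRAdd_comm (A B : Set ℝ) : setRAdd A B = setRAdd B A := by
  ext x
  simp only [setRAdd, mem_iUnion, exists_prop]
  constructor <;> exact fun ⟨a, ha, b, hb, hx⟩ => ⟨b, hb, a, ha, rAdd_comm a b ▸ hx⟩

lemma singleton_setRAdd_singleton (a b : ℝ) : setRAdd {a} {b} = rAdd a b := by
  simp [setRAdd]

lemma setRAdd_singleton_of_abs_lt {A : Set ℝ} {c : ℝ} (hA : A.Nonempty)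
    (h : ∀ x ∈ A, |x| < |c|) : setRAdd A {c} = {c} := by
  ext x
  simp only [setRAdd, mem_iUnion, mem_singleton_iff, exists_prop, exists_eq_left]
  refine ⟨fun ⟨a, ha, hx⟩ => ?_, fun hx => ?_⟩
  · rwa [rAdd_of_abs_lt' (h a ha), mem_singleton_iff] at hx
  · obtain ⟨a, ha⟩ := hA
    exact ⟨a, ha, by rw [rAdd_of_abs_lt' (h a ha), hx]; rfl⟩

lemma setRAdd_Icc_singleton_of_abs_le {m c : ℝ} (h : |c| ≤ m) :
    setRAdd (Icc (-m) m) {c} = Icc (-m) m := by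
  ext x
  simp only [setRAdd, mem_iUnion, mem_singleton_iff, exists_prop, exists_eq_left, mem_Icc,
    ← abs_le]
  refine ⟨fun ⟨a, ha, hx⟩ => ?_, fun hx => ?_⟩
  · rw [rAdd_eq_tropSum] at hx
    obtain ⟨z, rfl | rfl, hxz⟩ := exists_abs_le_of_mem_tropSum hx
    exacts [hxz.trans ha, hxz.trans h]
  · rcases lt_or_ge |c| |x| with hcx | hxc
    · exact ⟨x, hx, by rw [rAdd_of_abs_lt hcx]; rfl⟩
    · refine ⟨-c, by rwa [abs_neg], ?_⟩
      rw [rAdd_comm, rAdd_neg_right, mem_Icc, ← abs_le]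
      exact hxc

lemma setRAdd_tropSum_singleton {s : Set ℝ} (hs : s.Finite) (hne : s.Nonempty) (c : ℝ) :
    setRAdd (tropSum s) {c} = tropSum (insert c s) := by
  obtain ⟨y, hy, hmax⟩ := s.exists_max_image abs hs hne
  rcases lt_or_ge |y| |c| with hyc | hcy
  · have hmax' : ∀ z ∈ insert c s, |z| ≤ |c| := by
      rintro z (rfl | hz)
      exacts [le_rfl, (hmax z hz).trans hyc.le]
    have hneg : -c ∉ insert c s := by
      rintro (h | h)
      · rw [neg_eq_self.1 h, abs_zero] at hyc
        exact absurd hyc (abs_nonneg y).not_gt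
      · have := hmax _ h
        rw [abs_neg] at this
        exact this.not_gt hyc
    rw [tropSum_eq_singleton (mem_insert c s) hmax' hneg]
    refine setRAdd_singleton_of_abs_lt (tropSum_nonempty hs hne) fun x hx => ?_
    obtain ⟨z, hz, hxz⟩ := exists_abs_le_of_mem_tropSum hx
    exact (hxz.trans (hmax z hz)).trans_lt hyc
  · have hmax' : ∀ z ∈ insert c s, |z| ≤ |y| := by
      rintro z (rfl | hz)
      exacts [hcy, hmax z hz]
    by_cases hneg : -y ∈ s
    · rw [tropSum_eq_Icc hy hmax hneg, tropSum_eq_Icc (mem_insert_of_mem c hy) hmax'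
        (mem_insert_of_mem c hneg), setRAdd_Icc_singleton_of_abs_le hcy]
    · rw [tropSum_eq_singleton hy hmax hneg, singleton_setRAdd_singleton]
      by_cases hc : c = -y
      · rw [hc, rAdd_neg_right, tropSum_eq_Icc (mem_insert_of_mem _ hy) (hc ▸ hmax')
          (mem_insert _ _)]
      · rw [tropSum_eq_singleton (mem_insert_of_mem c hy) hmax' (by simp [Ne.symm hc, hneg]),
          rAdd_of_abs_le hcy hc]

lemma rAdd_assoc (a b c : ℝ) : setRAdd (rAdd a b) {c} = setRAdd {a} (rAdd b c) := by
  rw [setRAdd_comm {a}, rAdd_eq_tropSum, rAdd_eq_tropSum,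
    setRAdd_tropSum_singleton (toFinite _) (insert_nonempty _ _),
    setRAdd_tropSum_singleton (toFinite _) (insert_nonempty _ _), insert_comm c a, pair_comm c b]

lemma image_mul_rAdd (a b c : ℝ) : (a * ·) '' rAdd b c = rAdd (a * b) (a * c) := by
  rw [← image2_singleton_left (f := (· * ·)), ← tropSum_singleton a, rAdd_eq_tropSum,
    rAdd_eq_tropSum,
    image2_mul_tropSum (toFinite _) (singleton_nonempty a) (toFinite _) (insert_nonempty _ _),
    image2_singleton_left, image_pair]

lemma image2_mul_rAdd (a b c d : ℝ) :
    image2 (· * ·) (rAdd a b) (rAdd c d) =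
      setRAdd (setRAdd (rAdd (a * c) (a * d)) {b * c}) {b * d} := by
  simp only [rAdd_eq_tropSum]
  rw [image2_mul_tropSum (toFinite _) (insert_nonempty _ _) (toFinite _) (insert_nonempty _ _),
    setRAdd_tropSum_singleton (toFinite _) (insert_nonempty _ _),
    setRAdd_tropSum_singleton (toFinite _) (insert_nonempty _ _)]
  congr 1
  ext x
  simp only [image2_insert_left, image2_singleton_left, image_pair, mem_union, mem_insert_iff,
    mem_singleton_iff]
  tauto

/-- `ℝ` with the induced tropical addition and the usual
multiplication is a doubly distributive hyperfield: the addition has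
nonempty values, is commutative and associative, `0` is neutral, `-a` is
the unique additive inverse of `a`, multiplication distributes over `⊞`,
nonzero reals are multiplicatively invertible, and
`(a⊞b)·(c⊞d) = (ac)⊞(ad)⊞(bc)⊞(bd)` for all `a,b,c,d`. -/
theorem real_tropical_doubly_distributive_hyperfield :
    (∀ a b : ℝ, (rAdd a b).Nonempty) ∧
    (∀ a b : ℝ, rAdd a b = rAdd b a) ∧
    (∀ a b c : ℝ, setRAdd (rAdd a b) {c} = setRAdd {a} (rAdd b c)) ∧
    (∀ a : ℝ, rAdd 0 a = {a}) ∧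
    (∀ a x : ℝ, 0 ∈ rAdd a x ↔ x = -a) ∧
    (∀ a b c : ℝ, (a * ·) '' rAdd b c = rAdd (a * b) (a * c)) ∧
    (∀ a : ℝ, a ≠ 0 → ∃ b, a * b = 1) ∧
    (∀ a b c d : ℝ, Set.image2 (· * ·) (rAdd a b) (rAdd c d) =
      setRAdd (setRAdd (rAdd (a * c) (a * d)) {b * c}) {b * d}) :=
  ⟨rAdd_nonempty, rAdd_comm, rAdd_assoc, zero_rAdd, zero_mem_rAdd_iff, image_mul_rAdd,
    fun a ha => ⟨a⁻¹, mul_inv_cancel₀ ha⟩, image2_mul_rAdd⟩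
end

section
/- The map w : ℂ[X] → ℂ sending a nonzero polynomial p = Σₖ aₖXᵏ of degree n (aₙ ≠ 0) to (aₙ/|aₙ|)·eⁿ and sending 0 to 0 is a multiring homomorphism from the ring ℂ[X] to the complex tropical hyperfield: w(pq) = w(p)·w(q) and w(p+q) ∈ w(p)⊞w(q) for all p,q ∈ ℂ[X]. -/
/-- The map `w : ℂ[X] → ℂ` sending a nonzero polynomial with leading
coefficient `aₙ` and degree `n` to `(aₙ/|aₙ|)·eⁿ`, and `0` to `0`. -/
noncomputable def w (p : Polynomial ℂ) : ℂ :=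
  if p = 0 then 0
  else (p.leadingCoeff / (‖p.leadingCoeff‖ : ℂ)) *
    ((Real.exp (p.natDegree : ℝ) : ℝ) : ℂ)

/-!
`w p` has the phase of the leading coefficient of `p` and modulus `e ^ deg p`, so it is
multiplicative because leading coefficients multiply and degrees add. For a sum, if the degrees
differ the summand of higher degree dominates both `p + q` and the tropical sum. If they agree
and the leading coefficients cancel, the degree can only drop, so `w (p + q)` lies in the disk;
otherwise the leading coefficient of `p + q` is `lc p + lc q`, whose phase is a nonnegative
combination of the two phases, i.e. a point of the arc.
-/

open Polynomial

section TropicalAddition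

variable {a b c : ℂ}

lemma mem_tropAdd_left_of_norm_lt (h : ‖b‖ < ‖a‖) : a ∈ tropAdd a b := by
  simp [tropAdd, h]

lemma mem_tropAdd_right_of_norm_lt (h : ‖a‖ < ‖b‖) : b ∈ tropAdd a b := by
  simp [tropAdd, h, h.not_gt]

lemma mem_tropAdd_neg (hc : ‖c‖ ≤ ‖a‖) : c ∈ tropAdd a (-a) := by
  simp [tropAdd, hc]

/-- In the case `a + b = 0` the tropical sum is a disk, which contains the circle. -/
lemma mem_tropAdd_of_nonneg_combination (hab : ‖a‖ = ‖b‖) (hc : ‖c‖ = ‖a‖) {l m : ℝ}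
    (hl : 0 ≤ l) (hm : 0 ≤ m) (h : c = l * a + m * b) : c ∈ tropAdd a b := by
  rw [tropAdd, if_neg hab.symm.not_lt, if_neg hab.not_lt]
  split_ifs
  · exact hc.le
  · exact ⟨hc, l, m, hl, hm, h⟩

end TropicalAddition

lemma Complex.norm_mul_div_norm (z : ℂ) : ‖z‖ * (z / ‖z‖) = z := by
  rcases eq_or_ne z 0 with rfl | hz
  · simp
  · exact mul_div_cancel₀ z (by exact_mod_cast norm_ne_zero_iff.mpr hz)

section W

variable {p q : ℂ[X]}

lemma w_eq (p : ℂ[X]) : w p = p.leadingCoeff / ‖p.leadingCoeff‖ * Real.exp p.natDegree := by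
  by_cases hp : p = 0 <;> simp [w, hp]

lemma norm_w (hp : p ≠ 0) : ‖w p‖ = Real.exp p.natDegree := by
  have hlc : ‖p.leadingCoeff‖ ≠ 0 := norm_ne_zero_iff.mpr (leadingCoeff_ne_zero.mpr hp)
  rw [w_eq, norm_mul, norm_div, Complex.norm_real, Complex.norm_real, norm_norm, div_self hlc,
    one_mul, Real.norm_of_nonneg (Real.exp_pos _).le]

lemma norm_w_le_of_degree_le (h : p.degree ≤ q.degree) : ‖w p‖ ≤ ‖w q‖ := by
  rcases eq_or_ne p 0 with rfl | hp
  · simp [w]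
  have hq : q ≠ 0 := fun hq => hp (by simpa [hq] using h)
  rw [norm_w hp, norm_w hq, Real.exp_le_exp]
  exact_mod_cast natDegree_le_natDegree h

lemma norm_w_lt_of_degree_lt (h : p.degree < q.degree) : ‖w p‖ < ‖w q‖ := by
  have hq : q ≠ 0 := fun hq => not_lt_bot (hq ▸ h)
  rcases eq_or_ne p 0 with rfl | hp
  · simpa [w] using Real.exp_pos _ |>.trans_eq (norm_w hq).symm
  rw [norm_w hp, norm_w hq, Real.exp_lt_exp]
  exact_mod_cast natDegree_lt_natDegree hp h

lemma norm_w_eq_of_degree_eq (h : p.degree = q.degree) : ‖w p‖ = ‖w q‖ :=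
  (norm_w_le_of_degree_le h.le).antisymm (norm_w_le_of_degree_le h.ge)

lemma w_mul (p q : ℂ[X]) : w (p * q) = w p * w q := by
  rcases eq_or_ne p 0 with rfl | hp
  · simp [w]
  rcases eq_or_ne q 0 with rfl | hq
  · simp [w]
  have hp' : (‖p.leadingCoeff‖ : ℂ) ≠ 0 := by
    exact_mod_cast norm_ne_zero_iff.mpr (leadingCoeff_ne_zero.mpr hp)
  have hq' : (‖q.leadingCoeff‖ : ℂ) ≠ 0 := by
    exact_mod_cast norm_ne_zero_iff.mpr (leadingCoeff_ne_zero.mpr hq)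
  rw [w_eq, w_eq, w_eq, leadingCoeff_mul, natDegree_mul hp hq, norm_mul]
  push_cast [Real.exp_add]
  field_simp

lemma w_add_of_degree_lt (h : p.degree < q.degree) : w (p + q) = w q := by
  rw [w_eq, w_eq, leadingCoeff_add_of_degree_lt h, natDegree_add_eq_right_of_degree_lt h]

lemma w_add_mem_tropAdd_of_degree_eq (h : p.degree = q.degree) :
    w (p + q) ∈ tropAdd (w p) (w q) := by
  have hnat := natDegree_eq_of_degree_eq h
  by_cases hlc : p.leadingCoeff + q.leadingCoeff = 0
  · have hwq : w q = -w p := by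
      rw [w_eq, w_eq, eq_neg_of_add_eq_zero_right hlc, norm_neg, hnat, neg_div, neg_mul]
    have hdeg : (p + q).degree ≤ p.degree := (degree_add_le p q).trans (by rw [h, max_self])
    rw [hwq]
    exact mem_tropAdd_neg (norm_w_le_of_degree_le hdeg)
  have hdeg : (p + q).degree = p.degree := by
    rw [degree_add_eq_of_leadingCoeff_add_ne_zero hlc, h, max_self]
  refine mem_tropAdd_of_nonneg_combination (norm_w_eq_of_degree_eq h) (norm_w_eq_of_degree_eq hdeg)
    (l := ‖p.leadingCoeff‖ / ‖p.leadingCoeff + q.leadingCoeff‖)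
    (m := ‖q.leadingCoeff‖ / ‖p.leadingCoeff + q.leadingCoeff‖) (by positivity) (by positivity) ?_
  rw [w_eq, w_eq, w_eq, leadingCoeff_add_of_degree_eq h hlc, natDegree_eq_of_degree_eq hdeg, hnat]
  rw [Complex.ofReal_div, Complex.ofReal_div]
  linear_combination (-(Real.exp q.natDegree / ‖p.leadingCoeff + q.leadingCoeff‖ : ℂ)) *
    (Complex.norm_mul_div_norm p.leadingCoeff + Complex.norm_mul_div_norm q.leadingCoeff)

end W

/-- `w` is a multiring homomorphism from `ℂ[X]` to the complex
tropical hyperfield: `w(pq) = w(p)·w(q)` and `w(p+q) ∈ w(p)⊞w(q)`. -/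
theorem w_multiring_hom (p q : Polynomial ℂ) :
    w (p * q) = w p * w q ∧ w (p + q) ∈ tropAdd (w p) (w q) := by
  refine ⟨w_mul p q, ?_⟩
  rcases lt_trichotomy p.degree q.degree with h | h | h
  · rw [w_add_of_degree_lt h]
    exact mem_tropAdd_right_of_norm_lt (norm_w_lt_of_degree_lt h)
  · exact w_add_mem_tropAdd_of_degree_eq h
  · rw [add_comm, w_add_of_degree_lt h]
    exact mem_tropAdd_left_of_norm_lt (norm_w_lt_of_degree_lt h)
end

section
/- Define, for h > 0, the deformed triangle addition on ℝ≥0 by a ⊞ₕ b = {c ∈ ℝ≥0 : |a^{1/h} − b^{1/h}|^h ≤ c ≤ (a^{1/h} + b^{1/h})^h}. Then for a ≠ b, both endpoints |a^{1/h} − b^{1/h}|^h and (a^{1/h} + b^{1/h})^h tend to max(a,b) as h → 0⁺, while for a = b > 0 the lower endpoint is 0 and the upper endpoint (2a^{1/h})^h = 2^h·a tends to a as h → 0⁺. -/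
/-!
For `0 ≤ b < a` put `c = b / a < 1`, so that `a^(1/h) ± b^(1/h) = a^(1/h) (1 ± c^(1/h))` and the
endpoints equal `a (|1 ± c^(1/h)|)^h`. As `h → 0⁺`, `c^(1/h) → 0`, and `(x, y) ↦ x^y` is continuous
at `(1, 0)`, hence `(1 ± c^(1/h))^h → 1`. For `a = b` the same factorization gives `(2 a^(1/h))^h = 2^h a`.
-/

open Filter Set Real Topology

theorem tendsto_rpow_one_div_nhdsGT_zero_of_lt_one {c : ℝ} (hc0 : 0 ≤ c) (hc1 : c < 1) :
    Tendsto (fun h : ℝ => c ^ (1 / h)) (𝓝[>] 0) (𝓝 0) := by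
  simpa [Function.comp_def, one_div] using
    (tendsto_rpow_atTop_of_base_lt_one c (by linarith) hc1).comp tendsto_inv_nhdsGT_zero

theorem rpow_one_div_mul_rpow {a x h : ℝ} (ha : 0 ≤ a) (hx : 0 ≤ x) (hh : h ≠ 0) :
    (a ^ (1 / h) * x) ^ h = a * x ^ h := by
  rw [mul_rpow (rpow_nonneg ha _) hx, ← rpow_mul ha, one_div_mul_cancel hh, rpow_one]

theorem tendsto_rpow_one_div_mul_rpow_nhdsGT_zero {a L : ℝ} {g : ℝ → ℝ} (ha : 0 ≤ a)
    (hg0 : ∀ h, 0 ≤ g h) (hg : Tendsto g (𝓝[>] 0) (𝓝 L)) (hL : L ≠ 0) :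
    Tendsto (fun h => (a ^ (1 / h) * g h) ^ h) (𝓝[>] 0) (𝓝 a) := by
  have hpow : Tendsto (fun h => g h ^ h) (𝓝[>] 0) (𝓝 1) := by
    simpa using hg.rpow (tendsto_id.mono_left nhdsWithin_le_nhds) (Or.inl hL)
  have hlim : Tendsto (fun h => a * g h ^ h) (𝓝[>] 0) (𝓝 a) := by
    simpa using hpow.const_mul a
  refine hlim.congr' ?_
  filter_upwards [self_mem_nhdsWithin] with h hh
  exact (rpow_one_div_mul_rpow ha (hg0 h) (ne_of_gt hh)).symm

theorem tendsto_triangle_endpoints_of_lt {a b : ℝ} (hb : 0 ≤ b) (hba : b < a) :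
    Tendsto (fun h : ℝ => |a ^ (1 / h) - b ^ (1 / h)| ^ h) (𝓝[>] 0) (𝓝 a) ∧
      Tendsto (fun h : ℝ => (a ^ (1 / h) + b ^ (1 / h)) ^ h) (𝓝[>] 0) (𝓝 a) := by
  have ha : 0 < a := hb.trans_lt hba
  set c := b / a
  have hc0 : 0 ≤ c := div_nonneg hb ha.le
  have hc : Tendsto (fun h : ℝ => c ^ (1 / h)) (𝓝[>] 0) (𝓝 0) :=
    tendsto_rpow_one_div_nhdsGT_zero_of_lt_one hc0 ((div_lt_one ha).2 hba)
  have hb_eq : ∀ h : ℝ, b ^ (1 / h) = a ^ (1 / h) * c ^ (1 / h) := fun h => by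
    rw [← mul_rpow ha.le hc0, mul_div_cancel₀ _ ha.ne']
  constructor
  · have hg : Tendsto (fun h : ℝ => |1 - c ^ (1 / h)|) (𝓝[>] 0) (𝓝 |1 - 0|) :=
      (tendsto_const_nhds.sub hc).abs
    refine (tendsto_rpow_one_div_mul_rpow_nhdsGT_zero ha.le (fun _ => abs_nonneg _) hg
      (by norm_num)).congr fun h => ?_
    rw [hb_eq, ← mul_one_sub, abs_mul, abs_of_nonneg (rpow_nonneg ha.le _)]
  · have hg : Tendsto (fun h : ℝ => 1 + c ^ (1 / h)) (𝓝[>] 0) (𝓝 (1 + 0)) :=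
      tendsto_const_nhds.add hc
    refine (tendsto_rpow_one_div_mul_rpow_nhdsGT_zero ha.le
      (fun _ => add_nonneg zero_le_one (rpow_nonneg hc0 _)) hg (by norm_num)).congr fun h => ?_
    rw [hb_eq, ← mul_one_add]

/-- for the deformed triangle addition
`a ⊞ₕ b = {c : |a^(1/h) − b^(1/h)|^h ≤ c ≤ (a^(1/h) + b^(1/h))^h}` on
nonnegative reals: if `a ≠ b` both endpoints tend to `max a b` as `h → 0⁺`,
while if `a = b > 0` the lower endpoint is `0`, the upper endpoint equals
`2^h·a`, and the upper endpoint tends to `a` as `h → 0⁺`. -/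
theorem triangle_dequantization (a b : ℝ) (ha : 0 ≤ a) (hb : 0 ≤ b) :
    (a ≠ b →
      Tendsto (fun h : ℝ => |a ^ (1 / h) - b ^ (1 / h)| ^ h)
        (nhdsWithin 0 (Ioi 0)) (nhds (max a b)) ∧
      Tendsto (fun h : ℝ => (a ^ (1 / h) + b ^ (1 / h)) ^ h)
        (nhdsWithin 0 (Ioi 0)) (nhds (max a b))) ∧
    (a = b → 0 < a →
      (∀ h : ℝ, 0 < h → |a ^ (1 / h) - b ^ (1 / h)| ^ h = 0) ∧
      (∀ h : ℝ, 0 < h → (a ^ (1 / h) + b ^ (1 / h)) ^ h = 2 ^ h * a) ∧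
      Tendsto (fun h : ℝ => (a ^ (1 / h) + b ^ (1 / h)) ^ h)
        (nhdsWithin 0 (Ioi 0)) (nhds a)) := by
  refine ⟨fun hab => ?_, fun hab _ => ?_⟩
  · rcases hab.lt_or_gt with hab | hab
    · obtain ⟨hlo, hup⟩ := tendsto_triangle_endpoints_of_lt ha hab
      rw [max_eq_right hab.le]
      exact ⟨hlo.congr fun _ => by rw [abs_sub_comm], hup.congr fun _ => by rw [add_comm]⟩
    · rw [max_eq_left hab.le]
      exact tendsto_triangle_endpoints_of_lt hb hab
  · subst hab
    have hup : ∀ h : ℝ, 0 < h → (a ^ (1 / h) + a ^ (1 / h)) ^ h = 2 ^ h * a := fun h hh => by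
      rw [← mul_two, rpow_one_div_mul_rpow ha zero_le_two hh.ne', mul_comm]
    refine ⟨fun h hh => by simp [zero_rpow hh.ne'], hup, ?_⟩
    exact (tendsto_rpow_one_div_mul_rpow_nhdsGT_zero ha (fun _ => zero_le_two) tendsto_const_nhds
      two_ne_zero).congr fun _ => by rw [mul_two]
end
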